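/- Let k ≥ 2 and r ≥ 1 be integers. Define polynomials \widehat{P}^k_n ∈ ℝ[x] by \widehat{P}^k_1 = 1, \widehat{P}^k_2 = 1 − x, and \widehat{P}^k_{n+1} = ((k+1) − x)·\widehat{P}^k_n − k·\widehat{P}^k_{n-1} for n ≥ 2, and set \widehat{Q}^k_n = (x − k)·\widehat{P}^k_n + k·\widehat{P}^k_{n-1}. Then a real number λ is an eigenvalue of the graph Laplacian L = D − A of X_r^k if and only if λ is a root of \widehat{P}^k_s for some s with 2 ≤ s ≤ r+1, or λ is a root of \widehat{Q}^k_{r+1}. -/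

import Mathlib

open Polynomial

/-- Vertices of the rooted tree of depth `r` in which each vertex at depth `i < r`
has `b i` children: a vertex is a word assigning to each position `i < m ≤ r`
a letter in `Fin (b i)`; the empty word (`m = 0`) is the root, and the depth of a
vertex is its length `m`. -/
abbrev BVertex (b : ℕ → ℕ) (r : ℕ) := Σ m : Fin (r + 1), (i : Fin (m : ℕ)) → Fin (b i)

/-- `y` is a child of `x`: the word `y` extends the word `x` by one letter. -/
def BExt {b : ℕ → ℕ} {r : ℕ} (x y : BVertex b r) : Prop :=
  ∃ h : (y.1 : ℕ) = (x.1 : ℕ) + 1,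
    ∀ i : Fin (x.1 : ℕ), y.2 ⟨(i : ℕ), by have := i.isLt; omega⟩ = x.2 i

/-- Adjacency in the rooted tree: the parent/child relation. -/
def BAdj {b : ℕ → ℕ} {r : ℕ} (x y : BVertex b r) : Prop := BExt x y ∨ BExt y x

open Classical in
/-- Adjacency matrix of the rooted tree with branching sequence `b` and depth `r`. -/
noncomputable def BAdjMatrix (b : ℕ → ℕ) (r : ℕ) : Matrix (BVertex b r) (BVertex b r) ℝ :=
  fun x y => if BAdj x y then 1 else 0

/-- `lam` is an eigenvalue of the adjacency matrix of the tree. -/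
def IsAdjEigenvalue (b : ℕ → ℕ) (r : ℕ) (lam : ℝ) : Prop :=
  ∃ v : BVertex b r → ℝ, v ≠ 0 ∧ (BAdjMatrix b r).mulVec v = lam • v

/-- Dimension of the `lam`-eigenspace of the adjacency matrix of the tree. -/
noncomputable def adjEigDim (b : ℕ → ℕ) (r : ℕ) (lam : ℝ) : ℕ :=
  Module.finrank ℝ
    (LinearMap.ker ((BAdjMatrix b r).mulVecLin - lam • LinearMap.id))

open Classical in
/-- The degree of a vertex: the number of its neighbours. -/
noncomputable def BDegree (b : ℕ → ℕ) (r : ℕ) (x : BVertex b r) : ℝ :=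
  ∑ y : BVertex b r, if BAdj x y then (1 : ℝ) else 0

/-- The graph Laplacian `L = D − A` of the rooted tree. -/
noncomputable def BLapMatrix (b : ℕ → ℕ) (r : ℕ) :
    Matrix (BVertex b r) (BVertex b r) ℝ :=
  Matrix.diagonal (BDegree b r) - BAdjMatrix b r

/-- `lam` is an eigenvalue of the graph Laplacian of the tree. -/
def IsLapEigenvalue (b : ℕ → ℕ) (r : ℕ) (lam : ℝ) : Prop :=
  ∃ v : BVertex b r → ℝ, v ≠ 0 ∧ (BLapMatrix b r).mulVec v = lam • v

/-- The polynomials `\widehat{P}^k_n`: `\widehat{P}^k_1 = 1`, `\widehat{P}^k_2 = 1 − x`,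
`\widehat{P}^k_{n+1} = ((k+1) − x)·\widehat{P}^k_n − k·\widehat{P}^k_{n-1}`. -/
noncomputable def Phat (k : ℕ) : ℕ → Polynomial ℝ
  | 0 => 0
  | 1 => 1
  | 2 => 1 - X
  | n + 3 => (C ((k : ℝ) + 1) - X) * Phat k (n + 2) - C (k : ℝ) * Phat k (n + 1)

/-- The polynomials `\widehat{Q}^k_n = (x − k)·\widehat{P}^k_n + k·\widehat{P}^k_{n-1}`. -/
noncomputable def Qhat (k : ℕ) (n : ℕ) : Polynomial ℝ :=
  (X - C (k : ℝ)) * Phat k n + C (k : ℝ) * Phat k (n - 1)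

set_option linter.unusedVariables false
set_option linter.unnecessarySeqFocus false

namespace Scratch

variable {k r : ℕ}

abbrev V (k r : ℕ) := BVertex (fun _ => k) r

lemma vext {x y : V k r} (h1 : (x.1 : ℕ) = (y.1 : ℕ))
    (h2 : ∀ i : Fin (x.1 : ℕ), x.2 i = y.2 ⟨(i : ℕ), h1 ▸ i.isLt⟩) : x = y := by
  obtain ⟨⟨m, hm⟩, f⟩ := x
  obtain ⟨⟨m', hm'⟩, g⟩ := y
  simp only [Fin.val_mk] at h1
  subst h1
  have : f = g := by
    funext i
    exact h2 i
  subst this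
  rfl

def bparent (x : V k r) (h : 0 < (x.1 : ℕ)) : V k r :=
  ⟨⟨(x.1 : ℕ) - 1, by have := x.1.isLt; omega⟩,
   fun i => x.2 ⟨(i : ℕ), by have h2 := i.isLt; simp only [Fin.val_mk] at h2; omega⟩⟩

def bchild (x : V k r) (h : (x.1 : ℕ) < r) (j : Fin k) : V k r :=
  ⟨⟨(x.1 : ℕ) + 1, by omega⟩,
   fun i => if hi : (i : ℕ) < (x.1 : ℕ) then x.2 ⟨(i : ℕ), hi⟩ else j⟩

@[simp] lemma bparent_fst (x : V k r) (h : 0 < (x.1 : ℕ)) :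
    ((bparent x h).1 : ℕ) = (x.1 : ℕ) - 1 := rfl

@[simp] lemma bchild_fst (x : V k r) (h : (x.1 : ℕ) < r) (j : Fin k) :
    ((bchild x h j).1 : ℕ) = (x.1 : ℕ) + 1 := rfl

lemma bext_parent (x : V k r) (h : 0 < (x.1 : ℕ)) : BExt (bparent x h) x := by
  refine ⟨by simp [bparent]; omega, fun i => ?_⟩
  rfl

lemma bext_child (x : V k r) (h : (x.1 : ℕ) < r) (j : Fin k) : BExt x (bchild x h j) := by
  refine ⟨rfl, fun i => ?_⟩
  simp only [bchild]
  rw [dif_pos i.isLt]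

lemma bext_iff_parent (x y : V k r) : BExt y x ↔ ∃ h : 0 < (x.1 : ℕ), y = bparent x h := by
  constructor
  · rintro ⟨h1, h2⟩
    have hp : 0 < (x.1 : ℕ) := by omega
    refine ⟨hp, vext (by simp; omega) fun i => ?_⟩
    have := h2 i
    rw [← this]
    rfl
  · rintro ⟨h, rfl⟩
    exact bext_parent x h

lemma bext_iff_child (x y : V k r) :
    BExt x y ↔ ∃ (h : (x.1 : ℕ) < r) (j : Fin k), y = bchild x h j := by
  constructor
  · rintro ⟨h1, h2⟩
    have hx : (x.1 : ℕ) < r := by have := y.1.isLt; omega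
    refine ⟨hx, y.2 ⟨(x.1 : ℕ), by omega⟩, vext (by simp; omega) fun i => ?_⟩
    have hi : (i : ℕ) < (x.1 : ℕ) + 1 := by have := i.isLt; omega
    show y.2 i = dite _ _ _
    by_cases hc : (i : ℕ) < (x.1 : ℕ)
    · rw [dif_pos hc]
      simpa using h2 ⟨(i : ℕ), hc⟩
    · rw [dif_neg hc]
      have hie : i = ⟨(x.1 : ℕ), by omega⟩ := by apply Fin.ext; simp; omega
      rw [hie]
  · rintro ⟨h, j, rfl⟩
    exact bext_child x h j

lemma bchild_inj (x : V k r) (h : (x.1 : ℕ) < r) :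
    Function.Injective (bchild x h) := by
  intro j1 j2 he
  have h2 : HEq (bchild x h j1).2 (bchild x h j2).2 := by rw [he]
  have h3 : (bchild x h j1).2 = (bchild x h j2).2 := eq_of_heq h2
  have := congrFun h3 ⟨(x.1 : ℕ), by simp⟩
  simpa [bchild] using this


lemma not_both_ext (x y : V k r) : ¬ (BExt x y ∧ BExt y x) := by
  rintro ⟨⟨h1, -⟩, ⟨h2, -⟩⟩
  omega

open Classical in
lemma sum_ext_parent (x : V k r) (v : V k r → ℝ) :
    (∑ y : V k r, if BExt y x then v y else 0)
      = (if h : 0 < (x.1 : ℕ) then v (bparent x h) else 0) := by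
  by_cases hx : 0 < (x.1 : ℕ)
  · have hiff : ∀ y : V k r, BExt y x ↔ y = bparent x hx := by
      intro y
      rw [bext_iff_parent]
      exact ⟨fun ⟨h, e⟩ => e, fun e => ⟨hx, e⟩⟩
    rw [dif_pos hx]
    calc (∑ y : V k r, if BExt y x then v y else 0)
        = ∑ y : V k r, if y = bparent x hx then v y else 0 := by
          apply Finset.sum_congr rfl; intro y _; rw [if_congr (hiff y) rfl rfl]
      _ = v (bparent x hx) := Finset.sum_ite_eq' Finset.univ (bparent x hx) v |>.trans (by simp)
  · rw [dif_neg hx]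
    apply Finset.sum_eq_zero
    intro y _
    rw [if_neg]
    intro ⟨h, _⟩
    omega

open Classical in
lemma indicator_exists_eq_sum (c : Fin k → V k r) (hc : Function.Injective c)
    (y : V k r) (t : ℝ) :
    (if ∃ j : Fin k, y = c j then t else 0) = ∑ j : Fin k, if y = c j then t else 0 := by
  by_cases he : ∃ j : Fin k, y = c j
  · obtain ⟨j, rfl⟩ := he
    rw [if_pos ⟨j, rfl⟩,
      Finset.sum_eq_single j (fun j' _ hj' => if_neg fun he' => hj' (hc he').symm)
        (fun h => absurd (Finset.mem_univ j) h), if_pos rfl]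
  · rw [if_neg he]
    exact (Finset.sum_eq_zero fun j _ => if_neg fun e => he ⟨j, e⟩).symm

open Classical in
lemma sum_ext_child (x : V k r) (v : V k r → ℝ) :
    (∑ y : V k r, if BExt x y then v y else 0)
      = (if h : (x.1 : ℕ) < r then ∑ j : Fin k, v (bchild x h j) else 0) := by
  by_cases hx : (x.1 : ℕ) < r
  · have hiff : ∀ y : V k r, BExt x y ↔ ∃ j : Fin k, y = bchild x hx j := by
      intro y
      rw [bext_iff_child]
      exact ⟨fun ⟨h, j, e⟩ => ⟨j, e⟩, fun ⟨j, e⟩ => ⟨hx, j, e⟩⟩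
    rw [dif_pos hx]
    calc (∑ y : V k r, if BExt x y then v y else 0)
        = ∑ y : V k r, if ∃ j : Fin k, y = bchild x hx j then v y else 0 :=
          Finset.sum_congr rfl fun y _ => if_congr (hiff y) rfl rfl
      _ = ∑ y : V k r, ∑ j : Fin k, if y = bchild x hx j then v y else 0 :=
          Finset.sum_congr rfl fun y _ =>
            indicator_exists_eq_sum (bchild x hx) (bchild_inj x hx) y (v y)
      _ = ∑ j : Fin k, ∑ y : V k r, if y = bchild x hx j then v y else 0 := Finset.sum_comm
      _ = ∑ j : Fin k, v (bchild x hx j) := Finset.sum_congr rfl fun j _ =>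
            (Finset.sum_ite_eq' Finset.univ (bchild x hx j) v).trans (by simp)
  · rw [dif_neg hx]
    apply Finset.sum_eq_zero
    intro y _
    rw [if_neg]
    intro ⟨h, _⟩
    have := y.1.isLt
    omega

open Classical in
lemma sum_adj (x : V k r) (v : V k r → ℝ) :
    (∑ y : V k r, if BAdj x y then v y else 0) =
      (if h : 0 < (x.1 : ℕ) then v (bparent x h) else 0)
        + (if h : (x.1 : ℕ) < r then ∑ j : Fin k, v (bchild x h j) else 0) := by
  rw [← sum_ext_parent x v, ← sum_ext_child x v, ← Finset.sum_add_distrib]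
  apply Finset.sum_congr rfl
  intro y _
  simp only [BAdj]
  by_cases h1 : BExt y x
  · rw [if_pos h1, if_neg (fun h2 => not_both_ext x y ⟨h2, h1⟩), add_zero]; exact if_pos (Or.inr h1)
  · by_cases h2 : BExt x y
    · rw [if_neg h1, if_pos h2, zero_add]; exact if_pos (Or.inl h2)
    · rw [if_neg h1, if_neg h2, add_zero]; exact if_neg (fun (h : BExt x y ∨ BExt y x) => h.elim h2 h1)

open Classical in
lemma degree_eq (x : V k r) : BDegree (fun _ => k) r x =
    (if 0 < (x.1 : ℕ) then (1 : ℝ) else 0) + (if (x.1 : ℕ) < r then (k : ℝ) else 0) := by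
  unfold BDegree
  rw [sum_adj x (fun _ => (1 : ℝ))]
  congr 1 <;> split_ifs <;> simp

open Classical in
lemma lap_eigen_iff (v : V k r → ℝ) (lam : ℝ) :
    (BLapMatrix (fun _ => k) r).mulVec v = lam • v ↔
    ∀ x : V k r,
      ((if 0 < (x.1 : ℕ) then (1 : ℝ) else 0) + (if (x.1 : ℕ) < r then (k : ℝ) else 0)) * v x
        - ((if h : 0 < (x.1 : ℕ) then v (bparent x h) else 0)
           + (if h : (x.1 : ℕ) < r then ∑ j : Fin k, v (bchild x h j) else 0))
      = lam * v x := by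
  rw [funext_iff]
  refine forall_congr' fun x => ?_
  have hA : (BAdjMatrix (fun _ => k) r).mulVec v x
      = (if h : 0 < (x.1 : ℕ) then v (bparent x h) else 0)
        + (if h : (x.1 : ℕ) < r then ∑ j : Fin k, v (bchild x h j) else 0) := by
    rw [← sum_adj x v]
    simp only [Matrix.mulVec, dotProduct, BAdjMatrix, ite_mul, one_mul, zero_mul]
  rw [BLapMatrix, Matrix.sub_mulVec]
  simp only [Pi.sub_apply, Pi.smul_apply, smul_eq_mul, hA, Matrix.mulVec_diagonal,
    degree_eq]


noncomputable def Pe (k : ℕ) (lam : ℝ) (n : ℕ) : ℝ := (Phat k n).eval lam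

@[simp] lemma Pe_zero (lam : ℝ) : Pe k lam 0 = 0 := by simp [Pe, Phat]

@[simp] lemma Pe_one (lam : ℝ) : Pe k lam 1 = 1 := by simp [Pe, Phat]

@[simp] lemma Pe_two (lam : ℝ) : Pe k lam 2 = 1 - lam := by simp [Pe, Phat]

lemma Pe_rec (lam : ℝ) (n : ℕ) :
    Pe k lam (n + 3) = ((k : ℝ) + 1 - lam) * Pe k lam (n + 2) - k * Pe k lam (n + 1) := by
  simp [Pe, Phat]

lemma Qhat_eval (lam : ℝ) (n : ℕ) :
    (Qhat k n).eval lam = (lam - k) * Pe k lam n + k * Pe k lam (n - 1) := by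
  simp [Qhat, Pe]

noncomputable def sgn (k : ℕ) (j : Fin k) : ℝ :=
  (if (j : ℕ) = 0 then (1 : ℝ) else 0) - (if (j : ℕ) = 1 then (1 : ℝ) else 0)

lemma sum_sgn (hk : 2 ≤ k) : ∑ j : Fin k, sgn k j = 0 := by
  simp only [sgn]
  rw [Finset.sum_sub_distrib]
  have h0 : ∀ j : Fin k, ((j : ℕ) = 0) ↔ (j = ⟨0, by omega⟩) := by
    intro j; rw [Fin.ext_iff]
  have h1 : ∀ j : Fin k, ((j : ℕ) = 1) ↔ (j = ⟨1, by omega⟩) := by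
    intro j; rw [Fin.ext_iff]
  rw [Finset.sum_congr rfl fun j _ => if_congr (h0 j) rfl rfl,
    Finset.sum_congr rfl fun j _ => if_congr (h1 j) rfl rfl,
    Finset.sum_ite_eq' Finset.univ, Finset.sum_ite_eq' Finset.univ]
  simp

lemma bparent_bchild (x : V k r) (h : (x.1 : ℕ) < r) (j : Fin k)
    (h' : 0 < ((bchild x h j).1 : ℕ)) : bparent (bchild x h j) h' = x := by
  have h1 : ((bparent (bchild x h j) h').1 : ℕ) = (x.1 : ℕ) := by simp
  apply vext h1
  intro i
  have hi : (i : ℕ) < (x.1 : ℕ) := by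
    have := i.isLt; simp only [bparent_fst, bchild_fst] at this; omega
  show (bchild x h j).2 _ = _
  show dite _ _ _ = _
  rw [dif_pos hi]

def rootV (k r : ℕ) : V k r := ⟨⟨0, by omega⟩, fun i => Fin.elim0 i⟩

lemma eq_root (x : V k r) (hx : (x.1 : ℕ) = 0) : x = rootV k r := by
  have h1 : (x.1 : ℕ) = ((rootV k r).1 : ℕ) := by simpa [rootV] using hx
  apply vext h1
  intro i
  exact absurd i.isLt (by omega)

@[simp] lemma root_fst : ((rootV k r).1 : ℕ) = 0 := rfl


def leafV (hk : 0 < k) (r : ℕ) : V k r := ⟨⟨r, by omega⟩, fun _ => ⟨0, hk⟩⟩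

open Classical in
lemma qhat_eigen (hk : 2 ≤ k) (hr : 1 ≤ r) (lam : ℝ) (hq : (Qhat k (r + 1)).eval lam = 0) :
    ∃ v : V k r → ℝ, v ≠ 0 ∧ (BLapMatrix (fun _ => k) r).mulVec v = lam • v := by
  refine ⟨fun y => Pe k lam (r + 1 - ((y.1 : ℕ))), fun h0 => ?_, ?_⟩
  · have h1 := congrFun h0 (leafV (by omega) r)
    have e1 : r + 1 - ((leafV (show 0 < k by omega) r).1 : ℕ) = 1 := by
      show r + 1 - r = 1; omega
    rw [e1] at h1
    simp at h1
  · rw [lap_eigen_iff]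
    intro x
    simp only []
    have hdr : (x.1 : ℕ) ≤ r := by have := x.1.isLt; omega
    by_cases h0 : 0 < (x.1 : ℕ)
    · rw [if_pos h0, dif_pos h0, bparent_fst]
      by_cases hR : (x.1 : ℕ) < r
      · rw [if_pos hR, dif_pos hR]
        have hterm : ∀ j : Fin k, Pe k lam (r + 1 - ((bchild x hR j).1 : ℕ))
            = Pe k lam (r - (x.1 : ℕ)) := by
          intro j; rw [bchild_fst]; congr 1; omega
        rw [Finset.sum_congr rfl fun j _ => hterm j, Finset.sum_const, Finset.card_univ,
          Fintype.card_fin, nsmul_eq_mul]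
        obtain ⟨m, hm⟩ : ∃ m, r - (x.1 : ℕ) = m + 1 := ⟨r - (x.1 : ℕ) - 1, by omega⟩
        have e1 : r + 1 - ((x.1 : ℕ) - 1) = m + 3 := by omega
        have e2 : r + 1 - (x.1 : ℕ) = m + 2 := by omega
        rw [hm, e1, e2, Pe_rec]
        ring
      · rw [if_neg hR, dif_neg hR]
        have e1 : r + 1 - (x.1 : ℕ) = 1 := by omega
        have e2 : r + 1 - ((x.1 : ℕ) - 1) = 2 := by omega
        rw [e1, e2, Pe_one, Pe_two]
        ring
    · rw [if_neg h0, dif_neg h0]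
      have hR : (x.1 : ℕ) < r := by omega
      rw [if_pos hR, dif_pos hR]
      have hterm : ∀ j : Fin k, Pe k lam (r + 1 - ((bchild x hR j).1 : ℕ))
          = Pe k lam r := by
        intro j; rw [bchild_fst]; congr 1; omega
      rw [Finset.sum_congr rfl fun j _ => hterm j, Finset.sum_const, Finset.card_univ,
        Fintype.card_fin, nsmul_eq_mul]
      have e1 : r + 1 - (x.1 : ℕ) = r + 1 := by omega
      rw [e1]
      rw [Qhat_eval] at hq
      have e2 : r + 1 - 1 = r := by omega
      rw [e2] at hq
      linear_combination -hq


def inSub (d0 : ℕ) (y : V k r) : Prop :=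
  d0 < (y.1 : ℕ) ∧ ∀ i : Fin (y.1 : ℕ), (i : ℕ) < d0 → ((y.2 i) : ℕ) = 0

open Classical in
noncomputable def wvec (k r d0 : ℕ) (lam : ℝ) (y : V k r) : ℝ :=
  if h : inSub d0 y then sgn k (y.2 ⟨d0, h.1⟩) * Pe k lam (r + 1 - (y.1 : ℕ)) else 0

open Classical in
lemma wvec_pos {d0 : ℕ} (lam : ℝ) (y : V k r) (h : inSub d0 y) :
    wvec k r d0 lam y = sgn k (y.2 ⟨d0, h.1⟩) * Pe k lam (r + 1 - (y.1 : ℕ)) := dif_pos h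

open Classical in
lemma wvec_neg {d0 : ℕ} (lam : ℝ) (y : V k r) (h : ¬ inSub d0 y) :
    wvec k r d0 lam y = 0 := dif_neg h

-- (a) parent inside subtree
lemma wvec_parent_pos {d0 : ℕ} (lam : ℝ) (x : V k r) (hx : inSub d0 x)
    (hd : d0 + 1 < (x.1 : ℕ)) (h : 0 < (x.1 : ℕ)) :
    wvec k r d0 lam (bparent x h)
      = sgn k (x.2 ⟨d0, hx.1⟩) * Pe k lam (r + 2 - (x.1 : ℕ)) := by
  have hp : inSub d0 (bparent x h) := by
    refine ⟨by simp; omega, fun i hi => ?_⟩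
    exact hx.2 ⟨(i : ℕ), by have := i.isLt; simp only [bparent_fst] at this; omega⟩ hi
  rw [wvec_pos lam _ hp]
  have e : r + 1 - ((bparent x h).1 : ℕ) = r + 2 - (x.1 : ℕ) := by rw [bparent_fst]; omega
  rw [e]
  rfl

-- (b) parent is the top vertex: value 0
lemma wvec_parent_top {d0 : ℕ} (lam : ℝ) (x : V k r)
    (hd : ¬ d0 + 1 < (x.1 : ℕ)) (h : 0 < (x.1 : ℕ)) :
    wvec k r d0 lam (bparent x h) = 0 := by
  apply wvec_neg
  intro hp
  have := hp.1
  rw [bparent_fst] at this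
  omega

-- (c) parent of an outside vertex is outside
lemma wvec_parent_out {d0 : ℕ} (lam : ℝ) (x : V k r) (hx : ¬ inSub d0 x)
    (h : 0 < (x.1 : ℕ)) :
    wvec k r d0 lam (bparent x h) = 0 := by
  apply wvec_neg
  intro hp
  apply hx
  have hd : d0 < (x.1 : ℕ) := by have := hp.1; rw [bparent_fst] at this; omega
  refine ⟨hd, fun i hi => ?_⟩
  have hi' : (i : ℕ) < ((bparent x h).1 : ℕ) := by
    rw [bparent_fst]; have := hp.1; rw [bparent_fst] at this; omega
  exact hp.2 ⟨(i : ℕ), hi'⟩ hi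

-- (d) children of an inside vertex
lemma wvec_child_pos {d0 : ℕ} (lam : ℝ) (x : V k r) (hx : inSub d0 x)
    (h : (x.1 : ℕ) < r) (j : Fin k) :
    wvec k r d0 lam (bchild x h j)
      = sgn k (x.2 ⟨d0, hx.1⟩) * Pe k lam (r - (x.1 : ℕ)) := by
  have hc : inSub d0 (bchild x h j) := by
    refine ⟨by have := hx.1; simp; omega, fun i hi => ?_⟩
    have hi' : (i : ℕ) < (x.1 : ℕ) := by have := hx.1; omega
    have he : (bchild x h j).2 i = x.2 ⟨(i : ℕ), hi'⟩ := dif_pos hi'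
    rw [he]
    exact hx.2 ⟨(i : ℕ), hi'⟩ hi
  rw [wvec_pos lam _ hc]
  have e : r + 1 - ((bchild x h j).1 : ℕ) = r - (x.1 : ℕ) := by rw [bchild_fst]; omega
  rw [e]
  have he : (bchild x h j).2 ⟨d0, hc.1⟩ = x.2 ⟨d0, hx.1⟩ := dif_pos hx.1
  rw [he]

-- (e1) children of the top vertex, zero prefix
lemma wvec_child_top {d0 : ℕ} (lam : ℝ) (x : V k r) (hd : (x.1 : ℕ) = d0)
    (hz : ∀ i : Fin (x.1 : ℕ), (i : ℕ) < d0 → ((x.2 i) : ℕ) = 0)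
    (h : (x.1 : ℕ) < r) (j : Fin k) :
    wvec k r d0 lam (bchild x h j) = sgn k j * Pe k lam (r - d0) := by
  have hc : inSub d0 (bchild x h j) := by
    refine ⟨by simp; omega, fun i hi => ?_⟩
    have hi' : (i : ℕ) < (x.1 : ℕ) := by omega
    have he : (bchild x h j).2 i = x.2 ⟨(i : ℕ), hi'⟩ := dif_pos hi'
    rw [he]
    exact hz ⟨(i : ℕ), hi'⟩ hi
  rw [wvec_pos lam _ hc]
  have e : r + 1 - ((bchild x h j).1 : ℕ) = r - d0 := by rw [bchild_fst]; omega
  rw [e]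
  have he : (bchild x h j).2 ⟨d0, hc.1⟩ = j := dif_neg (by simp only [Fin.val_mk]; omega)
  rw [he]

-- (e2) children of a top-level vertex with nonzero prefix
lemma wvec_child_top' {d0 : ℕ} (lam : ℝ) (x : V k r) (hd : (x.1 : ℕ) = d0)
    (hz : ¬ ∀ i : Fin (x.1 : ℕ), (i : ℕ) < d0 → ((x.2 i) : ℕ) = 0)
    (h : (x.1 : ℕ) < r) (j : Fin k) :
    wvec k r d0 lam (bchild x h j) = 0 := by
  apply wvec_neg
  intro hc
  apply hz
  intro i hi
  have he : (bchild x h j).2 ⟨(i : ℕ), by simp⟩ = x.2 ⟨(i : ℕ), i.isLt⟩ :=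
    dif_pos i.isLt
  have := hc.2 ⟨(i : ℕ), by simp⟩ hi
  rw [he] at this
  convert this using 2

-- (f) children of other outside vertices
lemma wvec_child_out {d0 : ℕ} (lam : ℝ) (x : V k r) (hx : ¬ inSub d0 x)
    (hd : (x.1 : ℕ) ≠ d0) (h : (x.1 : ℕ) < r) (j : Fin k) :
    wvec k r d0 lam (bchild x h j) = 0 := by
  apply wvec_neg
  intro hc
  have hc1 := hc.1
  rw [bchild_fst] at hc1
  apply hx
  have hd' : d0 < (x.1 : ℕ) := by omega
  refine ⟨hd', fun i hi => ?_⟩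
  have hi' : (i : ℕ) < (x.1 : ℕ) + 1 := by have := i.isLt; omega
  have he : (bchild x h j).2 ⟨(i : ℕ), by simp⟩ = x.2 ⟨(i : ℕ), i.isLt⟩ :=
    dif_pos i.isLt
  have := hc.2 ⟨(i : ℕ), by simp⟩ hi
  rw [he] at this
  convert this using 2


open Classical in
lemma phat_eigen (hk : 2 ≤ k) (hr : 1 ≤ r) (lam : ℝ) (s : ℕ) (hs2 : 2 ≤ s) (hsr : s ≤ r + 1)
    (hroot : (Phat k s).eval lam = 0) :
    ∃ v : V k r → ℝ, v ≠ 0 ∧ (BLapMatrix (fun _ => k) r).mulVec v = lam • v := by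
  set d0 := r + 1 - s with hd0
  have hd0r : d0 < r := by omega
  have hPs : Pe k lam s = 0 := hroot
  refine ⟨wvec k r d0 lam, fun h0 => ?_, ?_⟩
  · have h1 := congrFun h0 (leafV (show 0 < k by omega) r)
    have hin : inSub d0 (leafV (show 0 < k by omega) r) := by
      refine ⟨by show d0 < r; omega, fun i hi => ?_⟩
      rfl
    rw [wvec_pos lam _ hin] at h1
    have e : r + 1 - (((leafV (show 0 < k by omega) r).1 : ℕ)) = 1 := by
      show r + 1 - r = 1; omega
    rw [e] at h1
    have hsg : sgn k ((leafV (show 0 < k by omega) r).2 ⟨d0, hin.1⟩) = 1 := by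
      simp [leafV, sgn]
    rw [hsg] at h1
    simp at h1
  · rw [lap_eigen_iff]
    intro x
    by_cases hx : inSub d0 x
    · have h0 : 0 < (x.1 : ℕ) := by have := hx.1; omega
      rw [if_pos h0, dif_pos h0, wvec_pos lam x hx]
      by_cases hR : (x.1 : ℕ) < r
      · rw [if_pos hR, dif_pos hR,
          Finset.sum_congr rfl fun j _ => wvec_child_pos lam x hx hR j,
          Finset.sum_const, Finset.card_univ, Fintype.card_fin, nsmul_eq_mul]
        by_cases hT : d0 + 1 < (x.1 : ℕ)
        · rw [wvec_parent_pos lam x hx hT h0]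
          obtain ⟨m, hm⟩ : ∃ m, r - (x.1 : ℕ) = m + 1 := ⟨r - (x.1 : ℕ) - 1, by omega⟩
          have e1 : r + 2 - (x.1 : ℕ) = m + 3 := by omega
          have e2 : r + 1 - (x.1 : ℕ) = m + 2 := by omega
          rw [hm, e1, e2, Pe_rec]
          ring
        · rw [wvec_parent_top lam x hT h0]
          have hxd : (x.1 : ℕ) = d0 + 1 := by have := hx.1; omega
          obtain ⟨m, hm⟩ : ∃ m, s = m + 3 := ⟨s - 3, by omega⟩
          have hrec : ((k : ℝ) + 1 - lam) * Pe k lam (m + 2) - (k : ℝ) * Pe k lam (m + 1)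
              = 0 := by
            rw [← Pe_rec, ← hm]; exact hPs
          have e1 : r + 1 - (x.1 : ℕ) = m + 2 := by omega
          have e2 : r - (x.1 : ℕ) = m + 1 := by omega
          rw [e1, e2]
          linear_combination sgn k (x.2 ⟨d0, hx.1⟩) * hrec
      · rw [if_neg hR, dif_neg hR]
        have hxr : (x.1 : ℕ) = r := by omega
        have e1 : r + 1 - (x.1 : ℕ) = 1 := by omega
        by_cases hT : d0 + 1 < (x.1 : ℕ)
        · rw [wvec_parent_pos lam x hx hT h0]
          have e2 : r + 2 - (x.1 : ℕ) = 2 := by omega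
          rw [e1, e2, Pe_one, Pe_two]
          ring
        · rw [wvec_parent_top lam x hT h0, e1, Pe_one]
          have hseq : s = 2 := by have := hx.1; omega
          have h2 : (1 : ℝ) - lam = 0 := by
            have := hPs; rw [hseq] at this; simpa using this
          linear_combination sgn k (x.2 ⟨d0, hx.1⟩) * h2
    · rw [wvec_neg lam x hx]
      have hpar : (if h : 0 < (x.1 : ℕ) then wvec k r d0 lam (bparent x h) else 0) = 0 := by
        split
        · exact wvec_parent_out lam x hx _
        · rfl
      have hch : (if h : (x.1 : ℕ) < r then ∑ j : Fin k, wvec k r d0 lam (bchild x h j)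
          else 0) = 0 := by
        split
        next h =>
          by_cases hd : (x.1 : ℕ) = d0
          · by_cases hz : ∀ i : Fin (x.1 : ℕ), (i : ℕ) < d0 → ((x.2 i) : ℕ) = 0
            · rw [Finset.sum_congr rfl fun j _ => wvec_child_top lam x hd hz h j,
                ← Finset.sum_mul, sum_sgn hk, zero_mul]
            · rw [Finset.sum_congr rfl fun j _ => wvec_child_top' lam x hd hz h j]
              simp
          · rw [Finset.sum_congr rfl fun j _ => wvec_child_out lam x hx hd h j]
            simp
        next => rfl
      rw [hpar, hch]
      ring


open Classical in
lemma forward_up (lam : ℝ) (v : V k r → ℝ)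
    (hv : ∀ x : V k r,
      ((if 0 < (x.1 : ℕ) then (1 : ℝ) else 0) + (if (x.1 : ℕ) < r then (k : ℝ) else 0)) * v x
        - ((if h : 0 < (x.1 : ℕ) then v (bparent x h) else 0)
           + (if h : (x.1 : ℕ) < r then ∑ j : Fin k, v (bchild x h j) else 0))
      = lam * v x)
    (hP : ∀ t, 2 ≤ t → t ≤ r + 1 → Pe k lam t ≠ 0) :
    ∀ m, ∀ x : V k r, (x.1 : ℕ) + m = r → ∀ h : 0 < (x.1 : ℕ),
      Pe k lam (m + 2) * v x = Pe k lam (m + 1) * v (bparent x h) := by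
  intro m
  induction m with
  | zero =>
    intro x hxm h
    have hx := hv x
    rw [if_pos h, dif_pos h, if_neg (by omega), dif_neg (by omega)] at hx
    have e1 : 0 + 2 = 2 := by omega
    have e2 : 0 + 1 = 1 := by omega
    rw [e1, e2, Pe_two, Pe_one]
    linear_combination hx
  | succ m ih =>
    intro x hxm h
    have hR : (x.1 : ℕ) < r := by omega
    have hx := hv x
    rw [if_pos h, dif_pos h, if_pos hR, dif_pos hR] at hx
    have hch : ∀ j : Fin k, Pe k lam (m + 2) * v (bchild x hR j)
        = Pe k lam (m + 1) * v x := by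
      intro j
      have h' : 0 < ((bchild x hR j).1 : ℕ) := by simp
      have hc := ih (bchild x hR j) (by simp; omega) h'
      rwa [bparent_bchild x hR j h'] at hc
    have hsum : Pe k lam (m + 2) * (∑ j : Fin k, v (bchild x hR j))
        = (k : ℝ) * (Pe k lam (m + 1) * v x) := by
      rw [Finset.mul_sum, Finset.sum_congr rfl fun j _ => hch j, Finset.sum_const,
        Finset.card_univ, Fintype.card_fin, nsmul_eq_mul]
    have hrec := Pe_rec (k := k) lam m
    have e1 : m + 1 + 2 = m + 3 := by omega
    have e2 : m + 1 + 1 = m + 2 := by omega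
    rw [e1, e2]
    linear_combination Pe k lam (m + 2) * hx + hsum + v x * hrec

open Classical in
lemma forward_zero (hk : 2 ≤ k) (hr : 1 ≤ r) (lam : ℝ) (v : V k r → ℝ)
    (hv : ∀ x : V k r,
      ((if 0 < (x.1 : ℕ) then (1 : ℝ) else 0) + (if (x.1 : ℕ) < r then (k : ℝ) else 0)) * v x
        - ((if h : 0 < (x.1 : ℕ) then v (bparent x h) else 0)
           + (if h : (x.1 : ℕ) < r then ∑ j : Fin k, v (bchild x h j) else 0))
      = lam * v x)
    (hP : ∀ t, 2 ≤ t → t ≤ r + 1 → Pe k lam t ≠ 0)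
    (hQ : (Qhat k (r + 1)).eval lam ≠ 0) : ∀ x : V k r, v x = 0 := by
  have hRroot : ((rootV k r).1 : ℕ) < r := by simp; omega
  have hroot0 : v (rootV k r) = 0 := by
    have hvr := hv (rootV k r)
    rw [if_neg (by simp), dif_neg (by simp), if_pos hRroot, dif_pos hRroot] at hvr
    have hch : ∀ j : Fin k, Pe k lam (r + 1) * v (bchild (rootV k r) hRroot j)
        = Pe k lam r * v (rootV k r) := by
      intro j
      have h' : 0 < ((bchild (rootV k r) hRroot j).1 : ℕ) := by simp
      have hc := forward_up lam v hv hP (r - 1) (bchild (rootV k r) hRroot j)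
        (by simp; omega) h'
      rw [bparent_bchild _ hRroot j h'] at hc
      have e1 : r - 1 + 2 = r + 1 := by omega
      have e2 : r - 1 + 1 = r := by omega
      rwa [e1, e2] at hc
    have hsum : Pe k lam (r + 1) * (∑ j : Fin k, v (bchild (rootV k r) hRroot j))
        = (k : ℝ) * (Pe k lam r * v (rootV k r)) := by
      rw [Finset.mul_sum, Finset.sum_congr rfl fun j _ => hch j, Finset.sum_const,
        Finset.card_univ, Fintype.card_fin, nsmul_eq_mul]
    have hQ' : (lam - (k : ℝ)) * Pe k lam (r + 1) + (k : ℝ) * Pe k lam r ≠ 0 := by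
      intro hc
      apply hQ
      rw [Qhat_eval]
      have e : r + 1 - 1 = r := by omega
      rw [e]
      exact hc
    have key : ((lam - (k : ℝ)) * Pe k lam (r + 1) + (k : ℝ) * Pe k lam r)
        * v (rootV k r) = 0 := by
      linear_combination (-(Pe k lam (r + 1))) * hvr - hsum
    exact (mul_eq_zero.mp key).resolve_left hQ'
  have main : ∀ m, ∀ x : V k r, (x.1 : ℕ) = m → v x = 0 := by
    intro m
    induction m with
    | zero =>
      intro x hx
      rw [eq_root x hx]
      exact hroot0
    | succ m ih =>
      intro x hx
      have h : 0 < (x.1 : ℕ) := by omega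
      have hpar : v (bparent x h) = 0 := ih (bparent x h) (by simp; omega)
      have hxr : (x.1 : ℕ) ≤ r := by have := x.1.isLt; omega
      have hup := forward_up lam v hv hP (r - (m + 1)) x (by omega) h
      rw [hpar, mul_zero] at hup
      have hne : Pe k lam (r - (m + 1) + 2) ≠ 0 := hP _ (by omega) (by omega)
      exact (mul_eq_zero.mp hup).resolve_left hne
  exact fun x => main (x.1 : ℕ) x rfl

end Scratch

/-- For `k ≥ 2` and `r ≥ 1`, a real number `lam` is an eigenvalue
of the graph Laplacian `L = D − A` of `X_r^k` iff `lam` is a root of `\widehat{P}^k_s`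
for some `2 ≤ s ≤ r + 1`, or a root of `\widehat{Q}^k_{r+1}`. -/
theorem laplacian_spectrum_kary_tree (k r : ℕ) (hk : 2 ≤ k) (hr : 1 ≤ r) (lam : ℝ) :
    IsLapEigenvalue (fun _ => k) r lam ↔
      (∃ s : ℕ, 2 ≤ s ∧ s ≤ r + 1 ∧ (Phat k s).IsRoot lam) ∨
        (Qhat k (r + 1)).IsRoot lam := by
  constructor
  · rintro ⟨v, hv0, hv⟩
    by_contra hcon
    push_neg at hcon
    obtain ⟨hPr, hQr⟩ := hcon
    apply hv0
    funext x
    refine Scratch.forward_zero hk hr lam v ((Scratch.lap_eigen_iff v lam).mp hv) ?_ hQr x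
    intro t ht2 htr
    exact hPr t ht2 htr
  · rintro (⟨s, hs2, hsr, hroot⟩ | hq)
    · exact Scratch.phat_eigen hk hr lam s hs2 hsr hroot
    · exact Scratch.qhat_eigen hk hr lam hq
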